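/- arXiv:2207.07702 — 3 statements merged into one kernel-verified Lean document; each statement's English description precedes it below -/
import Mathlib

section
/- For d ≥ 2, the function μ : ℝ^d \ {0} → ℝ defined by μ(ξ) = |ξ₁|/|ξ| + |ξ| satisfies ∫_{B(0,1)} 1/μ(ξ)² dξ < ∞. -/
open MeasureTheory Metric

/-- The anisotropic multiplier `μ(ξ) = |ξ₁|/|ξ| + |ξ|` (with the convention `0/0 = 0`). -/
noncomputable def mu {d : ℕ} [NeZero d] (ξ : EuclideanSpace ℝ (Fin d)) : ℝ :=
  |ξ 0| / ‖ξ‖ + ‖ξ‖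

/-- Fubini for lower integrals of products of functions of single coordinates. -/
theorem aux_lintegral_fin_prod {n : ℕ} (f : Fin n → ℝ → ENNReal) (hf : ∀ i, Measurable (f i)) :
    ∫⁻ x : Fin n → ℝ, ∏ i, f i (x i) = ∏ i, ∫⁻ x, f i x := by
  induction n with
  | zero => simp [volume_pi]
  | succ n ih =>
    have hmp := (measurePreserving_piFinSuccAbove (fun _ : Fin (n+1) => (volume : Measure ℝ))
      0).symm
    rw [volume_pi, ← hmp.lintegral_comp_emb (MeasurableEquiv.measurableEmbedding _)]
    simp only [MeasurableEquiv.piFinSuccAbove_symm_apply, Fin.insertNthEquiv, Equiv.coe_fn_mk,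
      Fin.insertNth_zero, Fin.prod_univ_succ, Fin.cons_zero, Fin.cons_succ, Fin.zero_succAbove, cast_eq]
    have hg : Measurable (fun y : Fin n → ℝ => ∏ j : Fin n, f (Fin.succ j) (y j)) :=
      Finset.measurable_prod Finset.univ fun (j : Fin n) _ =>
        (hf (Fin.succ j)).comp (measurable_pi_apply j)
    rw [lintegral_prod_mul (μ := (volume : Measure ℝ))
      (ν := Measure.pi fun _ : Fin n => (volume : Measure ℝ))
      (f := f 0) (g := fun y : Fin n → ℝ => ∏ j : Fin n, f (Fin.succ j) (y j))
      (hf 0).aemeasurable hg.aemeasurable]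
    rw [show (Measure.pi fun _ : Fin n => (volume : Measure ℝ)) = volume from (volume_pi).symm,
      ih (fun j => f (Fin.succ j)) (fun j => hf (Fin.succ j))]

/-- Finiteness of `∫_{-1}^{1} |t|^p dt` for `p > -1`. -/
theorem aux_one_dim {p : ℝ} (hp : -1 < p) :
    ∫⁻ t in Set.Ioo (-1 : ℝ) 1, ENNReal.ofReal |t| ^ p < ⊤ := by
  have h1 : ∫⁻ t in Set.Ioo (0 : ℝ) 1, ENNReal.ofReal |t| ^ p < ⊤ := by
    have hint : IntegrableOn (fun x : ℝ => x ^ p) (Set.Ioo 0 1) :=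
      (intervalIntegral.integrableOn_Ioo_rpow_iff one_pos).2 hp
    have hfin := hint.2
    rw [HasFiniteIntegral] at hfin
    refine lt_of_le_of_lt (le_of_eq ?_) hfin
    refine setLIntegral_congr_fun measurableSet_Ioo (fun x hx => ?_)
    rw [abs_of_pos hx.1, ENNReal.ofReal_rpow_of_pos hx.1,
      Real.enorm_eq_ofReal (Real.rpow_nonneg hx.1.le p)]
  have h2 : ∫⁻ t in Set.Ioo (-1 : ℝ) 0, ENNReal.ofReal |t| ^ p < ⊤ := by
    have hneg := (Measure.measurePreserving_neg (volume : Measure ℝ)).setLIntegral_comp_preimage_emb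
      (Homeomorph.neg ℝ).measurableEmbedding (fun t => ENNReal.ofReal |t| ^ p) (Set.Ioo 0 1)
    have hpre : (Neg.neg : ℝ → ℝ) ⁻¹' Set.Ioo 0 1 = Set.Ioo (-1 : ℝ) 0 := by
      ext x
      simp only [Set.mem_preimage, Set.mem_Ioo]
      constructor <;> (intro h; constructor <;> linarith [h.1, h.2])
    rw [hpre] at hneg
    simp only [abs_neg] at hneg
    rw [hneg]
    exact h1
  have hsub : Set.Ioo (-1 : ℝ) 1 ⊆ (Set.Ioo (-1 : ℝ) 0 ∪ Set.Ioo 0 1) ∪ {0} := by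
    intro x hx
    rcases lt_trichotomy x 0 with h | h | h
    · exact Or.inl (Or.inl ⟨hx.1, h⟩)
    · exact Or.inr h
    · exact Or.inl (Or.inr ⟨h, hx.2⟩)
  calc ∫⁻ t in Set.Ioo (-1 : ℝ) 1, ENNReal.ofReal |t| ^ p
      ≤ ∫⁻ t in (Set.Ioo (-1 : ℝ) 0 ∪ Set.Ioo 0 1) ∪ {0}, ENNReal.ofReal |t| ^ p :=
        lintegral_mono_set hsub
    _ ≤ (∫⁻ t in Set.Ioo (-1 : ℝ) 0 ∪ Set.Ioo 0 1, ENNReal.ofReal |t| ^ p)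
        + ∫⁻ t in ({0} : Set ℝ), ENNReal.ofReal |t| ^ p := lintegral_union_le _ _ _
    _ ≤ ((∫⁻ t in Set.Ioo (-1 : ℝ) 0, ENNReal.ofReal |t| ^ p)
        + ∫⁻ t in Set.Ioo (0 : ℝ) 1, ENNReal.ofReal |t| ^ p)
        + ∫⁻ t in ({0} : Set ℝ), ENNReal.ofReal |t| ^ p :=
        add_le_add (lintegral_union_le _ _ _) le_rfl
    _ < ⊤ := by
        rw [setLIntegral_measure_zero ({0} : Set ℝ) _ (by simp)]
        simpa using ENNReal.add_lt_top.2 ⟨h2, h1⟩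

theorem aux_coord_le_norm {d : ℕ} (ξ : EuclideanSpace ℝ (Fin d)) (i : Fin d) : |ξ i| ≤ ‖ξ‖ := by
  rw [EuclideanSpace.norm_eq, ← Real.sqrt_sq_eq_abs]
  apply Real.sqrt_le_sqrt
  have := Finset.single_le_sum (f := fun j => ‖ξ j‖ ^ 2) (fun j _ => sq_nonneg _)
    (Finset.mem_univ i)
  simpa [Real.norm_eq_abs, sq_abs] using this

/-- Pointwise bound: `1/μ² ≤ |ξ₀|^{-3/4} |ξ₁|^{-1/2}` (in `ℝ≥0∞`). -/
theorem aux_pointwise {d : ℕ} [NeZero d] (ξ : EuclideanSpace ℝ (Fin d)) :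
    ENNReal.ofReal (1 / (mu ξ) ^ 2) ≤
      ENNReal.ofReal |ξ 0| ^ (-(3 / 4) : ℝ) * ENNReal.ofReal |ξ 1| ^ (-(1 / 2) : ℝ) := by
  have hne : ∀ (c : ℝ) (q : ℝ), q < 0 → ENNReal.ofReal c ^ q ≠ 0 := by
    intro c q hq h
    rcases ENNReal.rpow_eq_zero_iff.1 h with ⟨_, h2⟩ | ⟨h1, _⟩
    · linarith
    · exact ENNReal.ofReal_ne_top h1
  by_cases h0 : ξ 0 = 0
  · rw [h0, abs_zero, ENNReal.ofReal_zero,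
      ENNReal.zero_rpow_of_neg (by norm_num : (-(3 / 4) : ℝ) < 0),
      ENNReal.top_mul (hne _ _ (by norm_num))]
    exact le_top
  by_cases h1 : ξ 1 = 0
  · rw [h1, abs_zero, ENNReal.ofReal_zero,
      ENNReal.zero_rpow_of_neg (by norm_num : (-(1 / 2) : ℝ) < 0),
      ENNReal.mul_top (hne _ _ (by norm_num))]
    exact le_top
  have hξ : ξ ≠ 0 := fun h => h0 (by rw [h]; rfl)
  set a : ℝ := |ξ 0| with ha_def
  set b : ℝ := |ξ 1| with hb_def
  set r : ℝ := ‖ξ‖ with hr_def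
  have ha : 0 < a := abs_pos.2 h0
  have hb : 0 < b := abs_pos.2 h1
  have hr : 0 < r := norm_pos_iff.2 hξ
  have hbr : b ≤ r := aux_coord_le_norm ξ 1
  have hmu : mu ξ = a / r + r := rfl
  have hmu_pos : 0 < mu ξ := by rw [hmu]; positivity
  -- key real inequality
  have key : a ^ ((3 : ℝ) / 4) * b ^ ((1 : ℝ) / 2) ≤ (mu ξ) ^ 2 := by
    have h1' : a + r ^ 2 ≤ (mu ξ) ^ 2 := by
      have hle : mu ξ * r ≤ mu ξ * mu ξ := by
        apply mul_le_mul_of_nonneg_left _ hmu_pos.le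
        rw [hmu]
        exact le_add_of_nonneg_left (div_nonneg ha.le hr.le)
      have heq : mu ξ * r = a + r ^ 2 := by
        rw [hmu]; field_simp
      calc a + r ^ 2 = mu ξ * r := heq.symm
        _ ≤ mu ξ * mu ξ := hle
        _ = (mu ξ) ^ 2 := (sq (mu ξ)).symm
    refine le_trans ?_ h1'
    set m : ℝ := max a (r ^ 2) with hm_def
    have hm : 0 < m := lt_max_of_lt_left ha
    have hbm : b ^ ((1 : ℝ) / 2) ≤ m ^ ((1 : ℝ) / 4) := by
      have h2 : b ^ ((1 : ℝ) / 2) ≤ r ^ ((1 : ℝ) / 2) :=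
        Real.rpow_le_rpow hb.le hbr (by norm_num)
      have h3 : r ^ ((1 : ℝ) / 2) = (r ^ 2) ^ ((1 : ℝ) / 4) := by
        rw [← Real.rpow_natCast r 2, ← Real.rpow_mul hr.le]
        norm_num
      rw [h3] at h2
      refine h2.trans (Real.rpow_le_rpow (by positivity) (le_max_right _ _) (by norm_num))
    have ham : a ^ ((3 : ℝ) / 4) ≤ m ^ ((3 : ℝ) / 4) :=
      Real.rpow_le_rpow ha.le (le_max_left _ _) (by norm_num)
    calc a ^ ((3 : ℝ) / 4) * b ^ ((1 : ℝ) / 2)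
        ≤ m ^ ((3 : ℝ) / 4) * m ^ ((1 : ℝ) / 4) := by
          apply mul_le_mul ham hbm (by positivity) (by positivity)
      _ = m := by
          rw [← Real.rpow_add hm]
          norm_num
      _ ≤ a + r ^ 2 := max_le (le_add_of_nonneg_right (sq_nonneg _))
          (le_add_of_nonneg_left ha.le)
  -- now conclude in ℝ≥0∞
  rw [ENNReal.ofReal_rpow_of_pos ha, ENNReal.ofReal_rpow_of_pos hb,
    ← ENNReal.ofReal_mul (Real.rpow_nonneg ha.le _)]
  apply ENNReal.ofReal_le_ofReal
  rw [Real.rpow_neg ha.le, Real.rpow_neg hb.le]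
  rw [div_le_iff₀ (by positivity)]
  rw [show (a ^ ((3:ℝ)/4))⁻¹ * (b ^ ((1:ℝ)/2))⁻¹ * (mu ξ) ^ 2
      = (mu ξ) ^ 2 / (a ^ ((3:ℝ)/4) * b ^ ((1:ℝ)/2)) by ring]
  rw [le_div_iff₀ (by positivity)]
  linarith

/-- For `d ≥ 2`, `∫_{B(0,1)} 1/μ(ξ)² dξ < ∞`. -/
theorem stmt0 (d : ℕ) [NeZero d] (hd : 2 ≤ d) :
    ∫⁻ ξ in ball (0 : EuclideanSpace ℝ (Fin d)) 1,
      ENNReal.ofReal (1 / (mu ξ) ^ 2) < ⊤ := by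
  classical
  have h10 : (1 : Fin d) ≠ 0 := by
    intro h
    have := congrArg Fin.val h
    rw [Fin.val_one', Nat.mod_eq_of_lt (lt_of_lt_of_le one_lt_two hd)] at this
    simp at this
  set f : Fin d → ℝ → ENNReal := fun i t =>
    (Set.Ioo (-1 : ℝ) 1).indicator (fun s =>
      if i = 0 then ENNReal.ofReal |s| ^ (-(3 / 4) : ℝ)
      else if i = 1 then ENNReal.ofReal |s| ^ (-(1 / 2) : ℝ) else 1) t with hf_def
  have hfmeas : ∀ i, Measurable (f i) := by
    intro i
    apply Measurable.indicator _ measurableSet_Ioo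
    split_ifs
    · exact ENNReal.continuous_rpow_const.measurable.comp measurable_abs.ennreal_ofReal
    · exact ENNReal.continuous_rpow_const.measurable.comp measurable_abs.ennreal_ofReal
    · exact measurable_const
  have step1 : ∀ ξ ∈ ball (0 : EuclideanSpace ℝ (Fin d)) 1,
      ENNReal.ofReal (1 / (mu ξ) ^ 2) ≤ ∏ i, f i (ξ i) := by
    intro ξ hξ
    have hn : ‖ξ‖ < 1 := by simpa using mem_ball_zero_iff.1 hξ
    have hmem : ∀ i, ξ i ∈ Set.Ioo (-1 : ℝ) 1 := by
      intro i
      have h := (aux_coord_le_norm ξ i).trans_lt hn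
      rw [abs_lt] at h
      exact ⟨h.1, h.2⟩
    have hval : ∀ i, f i (ξ i) =
        if i = 0 then ENNReal.ofReal |ξ i| ^ (-(3 / 4) : ℝ)
        else if i = 1 then ENNReal.ofReal |ξ i| ^ (-(1 / 2) : ℝ) else 1 := fun i =>
      Set.indicator_of_mem (hmem i) _
    have hprod : ∏ i, f i (ξ i)
        = ENNReal.ofReal |ξ 0| ^ (-(3 / 4) : ℝ) * ENNReal.ofReal |ξ 1| ^ (-(1 / 2) : ℝ) := by
      rw [← Finset.prod_subset (Finset.subset_univ ({0, 1} : Finset (Fin d)))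
        (fun i _ hi => ?_)]
      · rw [Finset.prod_insert (by simpa using h10.symm), Finset.prod_singleton, hval, hval]
        simp [h10]
      · simp only [Finset.mem_insert, Finset.mem_singleton, not_or] at hi
        rw [hval i, if_neg hi.1, if_neg hi.2]
    rw [hprod]
    exact aux_pointwise ξ
  have step2 : ∫⁻ ξ : EuclideanSpace ℝ (Fin d), ∏ i, f i (ξ i)
      = ∫⁻ x : Fin d → ℝ, ∏ i, f i (x i) :=
    (EuclideanSpace.volume_preserving_symm_measurableEquiv_toLp (Fin d)).lintegral_comp_emb
      (MeasurableEquiv.toLp 2 (Fin d → ℝ)).symm.measurableEmbedding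
      (fun x => ∏ i, f i (x i))
  have step3 : ∀ i, ∫⁻ t, f i t < ⊤ := by
    intro i
    rw [hf_def, lintegral_indicator measurableSet_Ioo]
    by_cases hi0 : i = 0
    · simp only [hi0, if_pos rfl]
      exact aux_one_dim (p := (-(3/4) : ℝ)) (by norm_num)
    · by_cases hi1 : i = 1
      · have h10 : (1 : Fin d) ≠ 0 := fun h => hi0 (hi1.trans h)
        simp only [hi1, if_neg h10, if_pos rfl]
        exact aux_one_dim (p := (-(1/2) : ℝ)) (by norm_num)
      · simp only [if_neg hi0, if_neg hi1]
        rw [setLIntegral_one]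
        exact measure_Ioo_lt_top
  calc ∫⁻ ξ in ball (0 : EuclideanSpace ℝ (Fin d)) 1, ENNReal.ofReal (1 / (mu ξ) ^ 2)
      ≤ ∫⁻ ξ in ball (0 : EuclideanSpace ℝ (Fin d)) 1, ∏ i, f i (ξ i) :=
        setLIntegral_mono' measurableSet_ball step1
    _ ≤ ∫⁻ ξ : EuclideanSpace ℝ (Fin d), ∏ i, f i (ξ i) := setLIntegral_le_lintegral _ _
    _ = ∫⁻ x : Fin d → ℝ, ∏ i, f i (x i) := step2
    _ = ∏ i, ∫⁻ t, f i t := aux_lintegral_fin_prod f hfmeas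
    _ < ⊤ := ENNReal.prod_lt_top fun i _ => step3 i
end

section
/- Let d ≥ 1, s > d/2, and let f ∈ 𝒮'(ℝ^d;ℂ) have f̂ ∈ L¹_loc with ‖f‖_{X^s} := ‖μ⟨·⟩^{s-1} f̂‖_{L²} < ∞, where μ(ξ) = |ξ₁|/|ξ| + |ξ|. Then f̂ ∈ L¹(ℝ^d) and ‖f̂‖_{L¹} ≤ C(d,s)‖f‖_{X^s}; more precisely, ∫_{B(0,1)} |f̂| dξ + (∫_{ℝ^d \ B(0,1)} (1+|ξ|²)^s |f̂|² dξ)^{1/2} ≤ C(d,s)‖f‖_{X^s}. -/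
open MeasureTheory Metric ENNReal

/-- The `X^s` norm on the Fourier side. -/
noncomputable def XNorm {d : ℕ} [NeZero d] (s : ℝ) (F : EuclideanSpace ℝ (Fin d) → ℂ) :
    ℝ≥0∞ :=
  eLpNorm (fun ξ => (mu ξ * (1 + ‖ξ‖ ^ 2) ^ ((s - 1) / 2)) • F ξ) 2 volume

namespace Stmt9Aux

open Set

theorem lintegral_fin_nat_prod' {n : ℕ} (f : Fin n → ℝ → ℝ≥0∞) (hf : ∀ i, Measurable (f i)) :
    ∫⁻ x : Fin n → ℝ, ∏ i, f i (x i) = ∏ i, ∫⁻ t, f i t := by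
  induction n with
  | zero => simp [volume_pi, lintegral_const]
  | succ n ih =>
    have hmp := (measurePreserving_piFinSuccAbove (fun _ : Fin (n+1) => (volume : Measure ℝ)) 0).symm
    rw [volume_pi, ← hmp.lintegral_comp_emb (MeasurableEquiv.measurableEmbedding _)]
    simp only [MeasurableEquiv.piFinSuccAbove_symm_apply]
    simp only [Fin.insertNthEquiv, Equiv.coe_fn_mk, Fin.insertNth_zero]
    simp only [Fin.prod_univ_succ, Fin.cons_zero, Fin.cons_succ, Fin.zero_succAbove, cast_eq]
    have hm : Measurable fun p : Fin n → ℝ => ∏ x : Fin n, f x.succ (p x) :=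
      Finset.measurable_prod _ fun i _ => (hf i.succ).comp (measurable_pi_apply i)
    rw [MeasureTheory.lintegral_prod_mul (hf 0).aemeasurable hm.aemeasurable]
    rw [show (Measure.pi fun _ : Fin n => (volume : Measure ℝ)) = volume from volume_pi.symm,
      ih (fun i => f i.succ) (fun i => hf _)]

theorem lintegral_euclidean_prod {d : ℕ} (g : Fin d → ℝ → ℝ≥0∞) (hg : ∀ i, Measurable (g i)) :
    ∫⁻ ξ : EuclideanSpace ℝ (Fin d), ∏ i, g i (ξ i) = ∏ i, ∫⁻ t, g i t := by
  have h := (EuclideanSpace.volume_preserving_symm_measurableEquiv_toLp (Fin d)).lintegral_comp_emb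
    (MeasurableEquiv.measurableEmbedding _) (fun x : Fin d → ℝ => ∏ i, g i (x i))
  rw [show (∫⁻ ξ : EuclideanSpace ℝ (Fin d), ∏ i, g i (ξ i))
    = ∫⁻ ξ : EuclideanSpace ℝ (Fin d),
        (fun x : Fin d → ℝ => ∏ i, g i (x i)) ((MeasurableEquiv.toLp 2 (Fin d → ℝ)).symm ξ)
    from rfl, h]
  exact lintegral_fin_nat_prod' g hg

noncomputable def gE (c : ℝ) (t : ℝ) : ℝ≥0∞ :=
  (Set.Icc (-1 : ℝ) 1).indicator (fun t => ENNReal.ofReal (|t| ^ (-c))) t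

lemma gE_measurable (c : ℝ) : Measurable (gE c) := by
  apply Measurable.indicator _ measurableSet_Icc
  exact ENNReal.measurable_ofReal.comp ((measurable_id.abs).pow_const _)

lemma gE_lt_top {c : ℝ} (h1 : c < 1) : ∫⁻ t, gE c t < ⊤ := by
  unfold gE
  rw [lintegral_indicator measurableSet_Icc]
  have hInt : IntegrableOn (fun t : ℝ => |t| ^ (-c)) (Icc (-1:ℝ) 1) volume := by
    have I1 : IntervalIntegrable (fun t : ℝ => |t| ^ (-c)) volume 0 1 := by
      have h := intervalIntegral.intervalIntegrable_rpow' (r := -c) (by linarith) (a := 0) (b := 1)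
      rw [intervalIntegrable_iff_integrableOn_Ioo_of_le zero_le_one] at h ⊢
      exact h.congr_fun (fun x hx => by rw [abs_of_pos hx.1]) measurableSet_Ioo
    have I2 : IntervalIntegrable (fun t : ℝ => |t| ^ (-c)) volume (-1) 0 := by
      have h := (IntervalIntegrable.iff_comp_neg (f := fun t : ℝ => |t| ^ (-c))).mp I1
      simp only [abs_neg, neg_zero, neg_neg] at h
      exact h.symm
    have I3 := I2.trans I1
    rw [intervalIntegrable_iff_integrableOn_Ioo_of_le (by norm_num : (-1:ℝ) ≤ 1)] at I3
    exact (integrableOn_Icc_iff_integrableOn_Ioo).mpr I3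
  exact hInt.lintegral_lt_top

lemma abs_coord_le_norm {d : ℕ} (ξ : EuclideanSpace ℝ (Fin d)) (i : Fin d) : |ξ i| ≤ ‖ξ‖ := by
  rw [EuclideanSpace.norm_eq]
  rw [show |ξ i| = Real.sqrt (ξ i ^ 2) from (Real.sqrt_sq_eq_abs _).symm]
  apply Real.sqrt_le_sqrt
  simpa [Real.norm_eq_abs, sq_abs] using
    Finset.single_le_sum (f := fun j => ‖ξ j‖ ^ 2) (fun j _ => sq_nonneg _) (Finset.mem_univ i)

noncomputable def cexp (d : ℕ) (i : Fin d) : ℝ :=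
  if d = 1 then 0 else if (i : ℕ) = 0 then 3/4 else 1/(2*((d:ℝ)-1))

lemma cexp_nonneg (d : ℕ) (i : Fin d) : 0 ≤ cexp d i := by
  unfold cexp
  have hd : 1 ≤ d := Fin.pos i
  split_ifs with h1 h2
  · norm_num
  · norm_num
  · have h2d : 2 ≤ d := by omega
    have h2r : (2:ℝ) ≤ (d:ℝ) := by exact_mod_cast h2d
    have : (0:ℝ) < 2 * ((d:ℝ) - 1) := by linarith
    positivity

lemma cexp_lt_one (d : ℕ) (i : Fin d) : cexp d i < 1 := by
  unfold cexp
  have hd : 1 ≤ d := Fin.pos i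
  split_ifs with h1 h2
  · norm_num
  · norm_num
  · have h2d : 2 ≤ d := by omega
    have h2r : (2:ℝ) ≤ (d:ℝ) := by exact_mod_cast h2d
    rw [div_lt_one (by linarith)]
    linarith

lemma mu_nonneg {d : ℕ} [NeZero d] (ξ : EuclideanSpace ℝ (Fin d)) : 0 ≤ mu ξ := by
  unfold mu
  positivity

lemma measurable_mu {d : ℕ} [NeZero d] : Measurable fun ξ : EuclideanSpace ℝ (Fin d) => mu ξ := by
  unfold mu
  exact ((((measurable_pi_apply 0).comp (WithLp.measurable_ofLp (p := 2) (X := Fin d → ℝ))).abs).div (measurable_norm (α := EuclideanSpace ℝ (Fin d)))).add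
    (measurable_norm (α := EuclideanSpace ℝ (Fin d)))

lemma null_coord {d : ℕ} [NeZero d] (i : Fin d) :
    volume {ξ : EuclideanSpace ℝ (Fin d) | ξ i = 0} = 0 := by
  have h : {ξ : EuclideanSpace ℝ (Fin d) | ξ i = 0}
      = (LinearMap.ker (EuclideanSpace.projₗ i (𝕜 := ℝ)) : Set (EuclideanSpace ℝ (Fin d))) := by
    ext ξ; simp [LinearMap.mem_ker]
  rw [h]
  apply Measure.addHaar_submodule
  intro htop
  have h1 : (EuclideanSpace.single i (1:ℝ)) ∈ LinearMap.ker (EuclideanSpace.projₗ i (𝕜 := ℝ)) := by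
    rw [htop]; trivial
  rw [LinearMap.mem_ker] at h1
  rw [show (EuclideanSpace.projₗ i (𝕜 := ℝ)) (EuclideanSpace.single i (1:ℝ))
    = (EuclideanSpace.single i (1:ℝ)) i from rfl, EuclideanSpace.single_apply] at h1
  simp at h1

lemma ae_coords_ne_zero {d : ℕ} [NeZero d] :
    ∀ᵐ ξ : EuclideanSpace ℝ (Fin d), ∀ i, ξ i ≠ 0 := by
  rw [ae_iff]
  have : {ξ : EuclideanSpace ℝ (Fin d) | ¬ ∀ i, ξ i ≠ 0}
      ⊆ ⋃ i, {ξ : EuclideanSpace ℝ (Fin d) | ξ i = 0} := by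
    intro ξ hξ
    simp only [Set.mem_setOf_eq, not_forall, not_not] at hξ
    obtain ⟨i, hi⟩ := hξ
    exact Set.mem_iUnion.mpr ⟨i, hi⟩
  exact measure_mono_null this (measure_iUnion_null fun i => null_coord i)

lemma prod_le_mu_sq {d : ℕ} [NeZero d] (ξ : EuclideanSpace ℝ (Fin d)) (hξ : ∀ i, ξ i ≠ 0) :
    ∏ i, |ξ i| ^ (cexp d i) ≤ mu ξ ^ 2 := by
  have hξ0 : ξ ≠ 0 := fun h => hξ 0 (by rw [h]; rfl)
  have hn : 0 < ‖ξ‖ := norm_pos_iff.mpr hξ0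
  have habs : 0 < |ξ 0| := abs_pos.mpr (hξ 0)
  have hA : 0 < |ξ 0| / ‖ξ‖ := div_pos habs hn
  have hmuA : |ξ 0| / ‖ξ‖ ≤ mu ξ := le_add_of_nonneg_right hn.le
  have hmuB : ‖ξ‖ ≤ mu ξ := le_add_of_nonneg_left hA.le
  have hmu0 : 0 < mu ξ := lt_of_lt_of_le hn hmuB
  by_cases hd1 : d = 1
  · subst hd1
    have hnorm1 : ‖ξ‖ = |ξ 0| := by
      rw [EuclideanSpace.norm_eq, Fin.sum_univ_one, Real.norm_eq_abs, sq_abs,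
        Real.sqrt_sq_eq_abs]
    have hmu1 : 1 ≤ mu ξ := by
      unfold mu
      rw [hnorm1, div_self habs.ne']
      linarith [abs_nonneg (ξ 0)]
    calc ∏ i, |ξ i| ^ (cexp 1 i) = 1 := by simp [cexp]
      _ ≤ mu ξ ^ 2 := by nlinarith
  · have hd2 : 2 ≤ d := by
      have := Nat.pos_of_ne_zero (NeZero.ne d); omega
    have hd2r : (2:ℝ) ≤ (d:ℝ) := by exact_mod_cast hd2
    set A := |ξ 0| / ‖ξ‖ with hAdef
    set Bn := ‖ξ‖ with hBdef
    have step1 : A ^ (3/4:ℝ) * Bn ^ (5/4:ℝ) ≤ mu ξ ^ 2 := by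
      have h1 : A ^ (3/4:ℝ) ≤ mu ξ ^ (3/4:ℝ) := Real.rpow_le_rpow hA.le hmuA (by norm_num)
      have h2 : Bn ^ (5/4:ℝ) ≤ mu ξ ^ (5/4:ℝ) := Real.rpow_le_rpow hn.le hmuB (by norm_num)
      calc A ^ (3/4:ℝ) * Bn ^ (5/4:ℝ) ≤ mu ξ ^ (3/4:ℝ) * mu ξ ^ (5/4:ℝ) :=
            mul_le_mul h1 h2 (Real.rpow_nonneg hn.le _) (Real.rpow_nonneg hmu0.le _)
        _ = mu ξ ^ ((3/4:ℝ) + (5/4:ℝ)) := (Real.rpow_add hmu0 _ _).symm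
        _ = mu ξ ^ (2:ℝ) := by norm_num
        _ = mu ξ ^ 2 := by rw [← Real.rpow_natCast (mu ξ) 2]; norm_num
    have step2 : A ^ (3/4:ℝ) * Bn ^ (5/4:ℝ) = |ξ 0| ^ (3/4:ℝ) * Bn ^ (1/2:ℝ) := by
      rw [hAdef, Real.div_rpow (abs_nonneg _) hn.le, div_mul_eq_mul_div, mul_div_assoc,
        ← Real.rpow_sub hn]
      norm_num
    have step3 : ∏ i ∈ Finset.univ.erase 0, |ξ i| ^ (cexp d i) ≤ Bn ^ (1/2:ℝ) := by
      have he : ∀ i ∈ Finset.univ.erase (0 : Fin d), cexp d i = 1/(2*((d:ℝ)-1)) := by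
        intro i hi
        have hi0 : i ≠ 0 := Finset.ne_of_mem_erase hi
        have : (i : ℕ) ≠ 0 := fun h => hi0 (Fin.ext (by simp [h]))
        simp [cexp, hd1, this]
      rw [Finset.prod_congr rfl (fun i hi => by rw [he i hi])]
      rw [Real.finset_prod_rpow _ _ (fun i _ => abs_nonneg _) _]
      have hprodle : ∏ i ∈ Finset.univ.erase (0 : Fin d), |ξ i| ≤ Bn ^ (d - 1 : ℕ) := by
        calc ∏ i ∈ Finset.univ.erase (0 : Fin d), |ξ i|
            ≤ ∏ _i ∈ Finset.univ.erase (0 : Fin d), Bn :=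
              Finset.prod_le_prod (fun i _ => abs_nonneg _)
                (fun i _ => abs_coord_le_norm ξ i)
          _ = Bn ^ (d - 1 : ℕ) := by
              rw [Finset.prod_const, Finset.card_erase_of_mem (Finset.mem_univ _),
                Finset.card_univ, Fintype.card_fin]
      have hpow : (Bn ^ (d - 1 : ℕ)) ^ (1/(2*((d:ℝ)-1))) = Bn ^ (1/2:ℝ) := by
        rw [← Real.rpow_natCast Bn (d-1), ← Real.rpow_mul hn.le]
        congr 1
        have hcast : ((d - 1 : ℕ) : ℝ) = (d:ℝ) - 1 := by
          have : 1 ≤ d := by omega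
          push_cast [this]; ring
        rw [hcast]
        have : (d:ℝ) - 1 ≠ 0 := by linarith
        field_simp
      calc (∏ i ∈ Finset.univ.erase (0 : Fin d), |ξ i|) ^ (1/(2*((d:ℝ)-1)))
          ≤ (Bn ^ (d - 1 : ℕ)) ^ (1/(2*((d:ℝ)-1))) := by
            apply Real.rpow_le_rpow (Finset.prod_nonneg fun i _ => abs_nonneg _) hprodle
            have : (0:ℝ) < 2 * ((d:ℝ) - 1) := by linarith
            positivity
        _ = Bn ^ (1/2:ℝ) := hpow
    have hc0 : cexp d 0 = 3/4 := by simp [cexp, hd1]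
    calc ∏ i, |ξ i| ^ (cexp d i)
        = |ξ 0| ^ (cexp d 0) * ∏ i ∈ Finset.univ.erase 0, |ξ i| ^ (cexp d i) :=
          (Finset.mul_prod_erase Finset.univ _ (Finset.mem_univ 0)).symm
      _ ≤ |ξ 0| ^ (3/4:ℝ) * Bn ^ (1/2:ℝ) := by
          rw [hc0]
          exact mul_le_mul_of_nonneg_left step3 (Real.rpow_nonneg (abs_nonneg _) _)
      _ = A ^ (3/4:ℝ) * Bn ^ (5/4:ℝ) := step2.symm
      _ ≤ mu ξ ^ 2 := step1

end Stmt9Aux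

set_option maxHeartbeats 1600000 in
/-- For `s > d/2`, the Fourier transform `F = f̂` of an element of `X^s` is in `L¹`:
`∫_{B(0,1)} |F| + (∫_{B(0,1)ᶜ} ⟨ξ⟩^{2s}|F|²)^{1/2} ≤ C(d,s)‖f‖_{X^s}`,
and in particular `‖F‖_{L¹} ≤ C(d,s)‖f‖_{X^s}`. -/
theorem stmt9 (d : ℕ) [NeZero d] (hd : 1 ≤ d) (s : ℝ) (hs : (d : ℝ) / 2 < s) :
    ∃ C : ℝ, 0 < C ∧
      ∀ F : EuclideanSpace ℝ (Fin d) → ℂ, Measurable F →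
        (∫⁻ ξ in ball (0 : EuclideanSpace ℝ (Fin d)) 1, (‖F ξ‖₊ : ℝ≥0∞)) +
            (∫⁻ ξ in (ball (0 : EuclideanSpace ℝ (Fin d)) 1)ᶜ,
              ENNReal.ofReal ((1 + ‖ξ‖ ^ 2) ^ s) * (‖F ξ‖₊ : ℝ≥0∞) ^ 2) ^ (1 / 2 : ℝ)
          ≤ ENNReal.ofReal C * XNorm s F ∧
        eLpNorm F 1 volume ≤ ENNReal.ofReal C * XNorm s F := by
  classical
  have hs0 : 0 < s := lt_of_le_of_lt (by positivity) hs
  set B : Set (EuclideanSpace ℝ (Fin d)) := ball 0 1 with hBdef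
  set w : EuclideanSpace ℝ (Fin d) → ℝ :=
    fun ξ => mu ξ ^ 2 * (1 + ‖ξ‖ ^ 2) ^ (s - 1) with hwdef
  have hwmeas : Measurable w := by
    apply Measurable.mul
    · exact (Stmt9Aux.measurable_mu).pow_const 2
    · exact (measurable_const.add
        ((measurable_norm (α := EuclideanSpace ℝ (Fin d))).pow_const 2)).pow_const (s - 1)
  set WE : EuclideanSpace ℝ (Fin d) → ℝ≥0∞ := fun ξ => ENNReal.ofReal (w ξ) with hWEdef
  have hWEmeas : Measurable WE := ENNReal.measurable_ofReal.comp hwmeas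
  have hWEtop : ∀ ξ, WE ξ ≠ ⊤ := fun ξ => ENNReal.ofReal_ne_top
  -- positivity of w off the null set
  have hmu_pos : ∀ ξ : EuclideanSpace ℝ (Fin d), (∀ i, ξ i ≠ 0) → 0 < mu ξ := by
    intro ξ hξ
    have hξ0 : ξ ≠ 0 := fun h => hξ 0 (by rw [h]; rfl)
    have hn : 0 < ‖ξ‖ := norm_pos_iff.mpr hξ0
    have : 0 ≤ |ξ 0| / ‖ξ‖ := by positivity
    unfold mu; linarith
  have hw_pos : ∀ ξ : EuclideanSpace ℝ (Fin d), (∀ i, ξ i ≠ 0) → 0 < w ξ := by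
    intro ξ hξ
    have h1 := hmu_pos ξ hξ
    have h2 : (0:ℝ) < 1 + ‖ξ‖ ^ 2 := by positivity
    rw [hwdef]
    have := Real.rpow_pos_of_pos h2 (s - 1)
    positivity
  -- the low frequency constant
  set cs : ℝ := max 1 ((2:ℝ) ^ (1 - s)) with hcsdef
  have hcs0 : 0 ≤ cs := le_trans zero_le_one (le_max_left _ _)
  set Klow : ℝ≥0∞ := ∫⁻ ξ in B, (WE ξ)⁻¹ with hKlowdef
  have hprodmeas : Measurable fun ξ : EuclideanSpace ℝ (Fin d) =>
      ∏ i, Stmt9Aux.gE (Stmt9Aux.cexp d i) (ξ i) :=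
    Finset.measurable_prod _ fun i _ =>
      (Stmt9Aux.gE_measurable _).comp ((measurable_pi_apply i).comp (WithLp.measurable_ofLp (p := 2) (X := Fin d → ℝ)))
  have hKlow_le : Klow ≤ ENNReal.ofReal cs *
      ∏ i, ∫⁻ t, Stmt9Aux.gE (Stmt9Aux.cexp d i) t := by
    have hbound : ∀ᵐ ξ ∂(volume.restrict B), (WE ξ)⁻¹ ≤
        ENNReal.ofReal cs * ∏ i, Stmt9Aux.gE (Stmt9Aux.cexp d i) (ξ i) := by
      filter_upwards [ae_restrict_of_ae Stmt9Aux.ae_coords_ne_zero,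
        ae_restrict_mem measurableSet_ball] with ξ hξ hmem
      have hnorm1 : ‖ξ‖ < 1 := by
        rwa [hBdef, mem_ball, dist_zero_right] at hmem
      have hw0 := hw_pos ξ hξ
      have hmu0 := hmu_pos ξ hξ
      have hb : (0:ℝ) < 1 + ‖ξ‖ ^ 2 := by positivity
      rw [hWEdef, ← ENNReal.ofReal_inv_of_pos hw0]
      have hwinv : (w ξ)⁻¹ ≤ (∏ i, |ξ i| ^ (-(Stmt9Aux.cexp d i))) * cs := by
        rw [hwdef, mul_inv]
        apply mul_le_mul
        · -- (mu ξ ^ 2)⁻¹ ≤ ∏ |ξ i| ^ (-c i)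
          have hp := Stmt9Aux.prod_le_mu_sq ξ hξ
          have hprodpos : 0 < ∏ i, |ξ i| ^ (Stmt9Aux.cexp d i) :=
            Finset.prod_pos fun i _ =>
              Real.rpow_pos_of_pos (abs_pos.mpr (hξ i)) _
          have h1 : (mu ξ ^ 2)⁻¹ ≤ (∏ i, |ξ i| ^ (Stmt9Aux.cexp d i))⁻¹ :=
            inv_anti₀ hprodpos hp
          calc (mu ξ ^ 2)⁻¹ ≤ (∏ i, |ξ i| ^ (Stmt9Aux.cexp d i))⁻¹ := h1
            _ = ∏ i, (|ξ i| ^ (Stmt9Aux.cexp d i))⁻¹ := by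
                rw [Finset.prod_inv_distrib]
            _ = ∏ i, |ξ i| ^ (-(Stmt9Aux.cexp d i)) := by
                apply Finset.prod_congr rfl
                intro i _
                rw [Real.rpow_neg (abs_nonneg _)]
        · -- ((1+‖ξ‖²)^(s-1))⁻¹ ≤ cs
          rw [← Real.rpow_neg hb.le]
          rcases le_or_gt (-(s-1)) 0 with hc | hc
          · exact le_trans (Real.rpow_le_one_of_one_le_of_nonpos (by nlinarith) hc)
              (le_max_left _ _)
          · have h2 : (1:ℝ) + ‖ξ‖ ^ 2 ≤ 2 := by nlinarith [norm_nonneg ξ]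
            have := Real.rpow_le_rpow hb.le h2 hc.le
            calc (1 + ‖ξ‖ ^ 2) ^ (-(s-1)) ≤ (2:ℝ) ^ (-(s-1)) := this
              _ = (2:ℝ) ^ (1 - s) := by norm_num
              _ ≤ cs := le_max_right _ _
        · positivity
        · exact Finset.prod_nonneg fun i _ => Real.rpow_nonneg (abs_nonneg _) _
      calc ENNReal.ofReal (w ξ)⁻¹
          ≤ ENNReal.ofReal ((∏ i, |ξ i| ^ (-(Stmt9Aux.cexp d i))) * cs) :=
            ENNReal.ofReal_le_ofReal hwinv
        _ = ENNReal.ofReal cs * ∏ i, ENNReal.ofReal (|ξ i| ^ (-(Stmt9Aux.cexp d i))) := by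
            rw [mul_comm, ENNReal.ofReal_mul hcs0,
              ENNReal.ofReal_prod_of_nonneg fun i _ => Real.rpow_nonneg (abs_nonneg _) _]
        _ = ENNReal.ofReal cs * ∏ i, Stmt9Aux.gE (Stmt9Aux.cexp d i) (ξ i) := by
            congr 1
            apply Finset.prod_congr rfl
            intro i _
            have hmemIcc : ξ i ∈ Set.Icc (-1:ℝ) 1 := by
              have := Stmt9Aux.abs_coord_le_norm ξ i
              constructor <;> [linarith [abs_le.mp (le_of_lt (lt_of_le_of_lt this hnorm1))];
                linarith [abs_le.mp (le_of_lt (lt_of_le_of_lt this hnorm1))]]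
            rw [Stmt9Aux.gE, Set.indicator_of_mem hmemIcc]
    calc Klow ≤ ∫⁻ ξ in B, ENNReal.ofReal cs *
          ∏ i, Stmt9Aux.gE (Stmt9Aux.cexp d i) (ξ i) := lintegral_mono_ae hbound
      _ ≤ ∫⁻ ξ : EuclideanSpace ℝ (Fin d),
            ENNReal.ofReal cs * ∏ i, Stmt9Aux.gE (Stmt9Aux.cexp d i) (ξ i) :=
          setLIntegral_le_lintegral _ _
      _ = ENNReal.ofReal cs * ∫⁻ ξ : EuclideanSpace ℝ (Fin d),
            ∏ i, Stmt9Aux.gE (Stmt9Aux.cexp d i) (ξ i) :=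
          lintegral_const_mul _ hprodmeas
      _ = ENNReal.ofReal cs * ∏ i, ∫⁻ t, Stmt9Aux.gE (Stmt9Aux.cexp d i) t := by
          rw [Stmt9Aux.lintegral_euclidean_prod _
            (fun i => Stmt9Aux.gE_measurable _)]
  have hKlow_top : Klow ≠ ⊤ := by
    apply ne_top_of_le_ne_top _ hKlow_le
    apply (ENNReal.mul_lt_top ENNReal.ofReal_lt_top
      (ENNReal.prod_lt_top fun i _ =>
        Stmt9Aux.gE_lt_top (Stmt9Aux.cexp_lt_one d i))).ne
  -- the Japanese bracket constant
  set J : ℝ≥0∞ := ∫⁻ ξ : EuclideanSpace ℝ (Fin d),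
    ENNReal.ofReal ((1 + ‖ξ‖ ^ 2) ^ (-s)) with hJdef
  have hJ_top : J ≠ ⊤ := by
    have hint : Integrable
        (fun ξ : EuclideanSpace ℝ (Fin d) => ((1:ℝ) + ‖ξ‖ ^ 2) ^ (-(2*s)/2)) :=
      integrable_rpow_neg_one_add_norm_sq
        (by rw [finrank_euclideanSpace_fin]; linarith)
    simp only [show -(2*s)/2 = -s from by ring] at hint
    rw [hJdef]
    exact hint.lintegral_lt_top.ne
  -- the total constant
  set Ktot : ℝ≥0∞ := Klow ^ (1/2:ℝ) + (2:ℝ≥0∞) ^ (1/2:ℝ)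
    + J ^ (1/2:ℝ) * (2:ℝ≥0∞) ^ (1/2:ℝ) with hKtotdef
  have hKtot_top : Ktot ≠ ⊤ := by
    rw [hKtotdef]
    apply ENNReal.add_ne_top.mpr
    constructor
    · apply ENNReal.add_ne_top.mpr
      exact ⟨(ENNReal.rpow_lt_top_of_nonneg (by norm_num) hKlow_top).ne,
        (ENNReal.rpow_lt_top_of_nonneg (by norm_num) (by norm_num)).ne⟩
    · exact (ENNReal.mul_lt_top
        (ENNReal.rpow_lt_top_of_nonneg (by norm_num) hJ_top)
        (ENNReal.rpow_lt_top_of_nonneg (by norm_num) (by norm_num))).ne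
  refine ⟨Ktot.toReal + 1, by positivity, ?_⟩
  have hC : Ktot ≤ ENNReal.ofReal (Ktot.toReal + 1) := by
    rw [ENNReal.ofReal_add ENNReal.toReal_nonneg zero_le_one,
      ENNReal.ofReal_toReal hKtot_top]
    exact le_self_add
  intro F hF
  set Xsq : ℝ≥0∞ := ∫⁻ ξ, WE ξ * (‖F ξ‖₊ : ℝ≥0∞) ^ 2 with hXsqdef
  -- identification of the X norm
  have hXNorm : XNorm s F = Xsq ^ (1/2:ℝ) := by
    rw [XNorm, eLpNorm_eq_lintegral_rpow_enorm_toReal two_ne_zero ENNReal.ofNat_ne_top]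
    rw [show ((2:ℝ≥0∞)).toReal = (2:ℝ) by norm_num]
    congr 1
    apply lintegral_congr
    intro ξ
    have hmun := Stmt9Aux.mu_nonneg ξ
    have hb : (0:ℝ) < 1 + ‖ξ‖ ^ 2 := by positivity
    have hcnn : 0 ≤ mu ξ * (1 + ‖ξ‖ ^ 2) ^ ((s - 1) / 2) := by
      have := Real.rpow_nonneg hb.le ((s-1)/2)
      positivity
    change (‖(mu ξ * (1 + ‖ξ‖ ^ 2) ^ ((s - 1) / 2)) • F ξ‖₊ : ℝ≥0∞) ^ (2:ℝ) = _
    rw [nnnorm_smul, ENNReal.coe_mul,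
      ENNReal.mul_rpow_of_ne_top ENNReal.coe_ne_top ENNReal.coe_ne_top]
    congr 1
    · rw [show (‖mu ξ * (1 + ‖ξ‖ ^ 2) ^ ((s - 1) / 2)‖₊ : ℝ≥0∞) = ENNReal.ofReal (mu ξ * (1 + ‖ξ‖ ^ 2) ^ ((s - 1) / 2)) from Real.enorm_eq_ofReal hcnn,
        ENNReal.ofReal_rpow_of_nonneg hcnn (by norm_num : (0:ℝ) ≤ 2)]
      congr 1
      rw [Real.mul_rpow hmun (Real.rpow_nonneg hb.le _)]
      congr 1
      · rw [show ((2:ℝ)) = ((2:ℕ):ℝ) by norm_num, Real.rpow_natCast]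
      · rw [← Real.rpow_mul hb.le]
        congr 1
        ring
    · rw [show ((2:ℝ)) = ((2:ℕ):ℝ) by norm_num, ENNReal.rpow_natCast]
  have hconj : Real.HolderConjugate 2 2 := Real.HolderConjugate.two_two
  -- low frequency estimate
  have hT1 : (∫⁻ ξ in B, (‖F ξ‖₊ : ℝ≥0∞)) ≤ Klow ^ (1/2:ℝ) * Xsq ^ (1/2:ℝ) := by
    set u : EuclideanSpace ℝ (Fin d) → ℝ≥0∞ := fun ξ => (WE ξ) ^ (1/2:ℝ) with hudef
    have humeas : Measurable u := hWEmeas.pow_const _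
    have hpt : ∀ᵐ ξ ∂(volume.restrict B), (‖F ξ‖₊ : ℝ≥0∞) ≤
        ((fun ξ => (u ξ)⁻¹) * fun ξ => u ξ * ‖F ξ‖₊) ξ := by
      filter_upwards [ae_restrict_of_ae Stmt9Aux.ae_coords_ne_zero] with ξ hξ
      have hw0 := hw_pos ξ hξ
      have hWne : WE ξ ≠ 0 := (ENNReal.ofReal_pos.mpr hw0).ne'
      have hu0 : u ξ ≠ 0 := (ENNReal.rpow_pos (ENNReal.ofReal_pos.mpr hw0)
        (hWEtop ξ)).ne'
      have hutop : u ξ ≠ ⊤ := ENNReal.rpow_ne_top_of_nonneg (by norm_num) (hWEtop ξ)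
      simp only [Pi.mul_apply]
      rw [← mul_assoc, ENNReal.inv_mul_cancel hu0 hutop, one_mul]
    have e1 : ∫⁻ ξ in B, (u ξ)⁻¹ ^ (2:ℝ) = Klow := by
      apply lintegral_congr
      intro ξ
      rw [ENNReal.inv_rpow, hudef, ← ENNReal.rpow_mul]
      norm_num
    have e2 : ∫⁻ ξ in B, (u ξ * ‖F ξ‖₊) ^ (2:ℝ) ≤ Xsq := by
      have : ∫⁻ ξ in B, (u ξ * ‖F ξ‖₊) ^ (2:ℝ)
          = ∫⁻ ξ in B, WE ξ * (‖F ξ‖₊ : ℝ≥0∞) ^ 2 := by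
        apply lintegral_congr
        intro ξ
        rw [ENNReal.mul_rpow_of_nonneg _ _ (by norm_num : (0:ℝ) ≤ 2), hudef,
          ← ENNReal.rpow_mul]
        norm_num
      rw [this]
      exact setLIntegral_le_lintegral _ _
    calc (∫⁻ ξ in B, (‖F ξ‖₊ : ℝ≥0∞)) ≤
        ∫⁻ ξ in B, ((fun ξ => (u ξ)⁻¹) * fun ξ => u ξ * ‖F ξ‖₊) ξ :=
          lintegral_mono_ae hpt
      _ ≤ (∫⁻ ξ in B, (u ξ)⁻¹ ^ (2:ℝ)) ^ (1/2:ℝ) *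
          (∫⁻ ξ in B, (u ξ * ‖F ξ‖₊) ^ (2:ℝ)) ^ (1/2:ℝ) :=
          ENNReal.lintegral_mul_le_Lp_mul_Lq _ hconj humeas.inv.aemeasurable
            (humeas.mul hF.nnnorm.coe_nnreal_ennreal).aemeasurable
      _ ≤ Klow ^ (1/2:ℝ) * Xsq ^ (1/2:ℝ) := by
          rw [e1]
          exact mul_le_mul_right (ENNReal.rpow_le_rpow e2 (by norm_num)) _
  -- high frequency quadratic estimate
  have hhigh : ∀ ξ : EuclideanSpace ℝ (Fin d), ξ ∈ Bᶜ →
      ENNReal.ofReal ((1 + ‖ξ‖ ^ 2) ^ s) ≤ 2 * WE ξ := by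
    intro ξ hmem
    have h1x : 1 ≤ ‖ξ‖ := by
      rw [hBdef, Set.mem_compl_iff, mem_ball, dist_zero_right] at hmem
      linarith [not_lt.mp hmem]
    have hb : (0:ℝ) < 1 + ‖ξ‖ ^ 2 := by positivity
    have hmuB : ‖ξ‖ ≤ mu ξ := le_add_of_nonneg_left (by positivity)
    have hx : 1 + ‖ξ‖ ^ 2 ≤ 2 * mu ξ ^ 2 := by
      have h2 : ‖ξ‖ ^ 2 ≤ mu ξ ^ 2 := by nlinarith [norm_nonneg ξ]
      nlinarith
    have key : (1 + ‖ξ‖ ^ 2) ^ s ≤ 2 * w ξ := by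
      have h1 := Real.rpow_add hb 1 (s-1)
      rw [Real.rpow_one] at h1
      have h1' : (1 + ‖ξ‖ ^ 2) ^ s = (1 + ‖ξ‖ ^ 2) * (1 + ‖ξ‖ ^ 2) ^ (s-1) := by
        rw [← h1]; congr 1; ring
      rw [h1', hwdef]
      have hrp : 0 ≤ (1 + ‖ξ‖ ^ 2) ^ (s-1) := Real.rpow_nonneg hb.le _
      calc (1 + ‖ξ‖ ^ 2) * (1 + ‖ξ‖ ^ 2) ^ (s-1)
          ≤ (2 * mu ξ ^ 2) * (1 + ‖ξ‖ ^ 2) ^ (s-1) :=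
            mul_le_mul_of_nonneg_right hx hrp
        _ = 2 * (mu ξ ^ 2 * (1 + ‖ξ‖ ^ 2) ^ (s-1)) := by ring
    calc ENNReal.ofReal ((1 + ‖ξ‖ ^ 2) ^ s) ≤ ENNReal.ofReal (2 * w ξ) :=
        ENNReal.ofReal_le_ofReal key
      _ = 2 * WE ξ := by
          rw [ENNReal.ofReal_mul (by norm_num : (0:ℝ) ≤ 2)]
          congr 1
          norm_num
  have hT2sq : (∫⁻ ξ in Bᶜ,
      ENNReal.ofReal ((1 + ‖ξ‖ ^ 2) ^ s) * (‖F ξ‖₊ : ℝ≥0∞) ^ 2) ≤ 2 * Xsq := by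
    calc (∫⁻ ξ in Bᶜ, ENNReal.ofReal ((1 + ‖ξ‖ ^ 2) ^ s) * (‖F ξ‖₊ : ℝ≥0∞) ^ 2)
        ≤ ∫⁻ ξ in Bᶜ, 2 * (WE ξ * (‖F ξ‖₊ : ℝ≥0∞) ^ 2) := by
          apply lintegral_mono_ae
          filter_upwards [ae_restrict_mem measurableSet_ball.compl] with ξ hmem
          rw [← mul_assoc]
          exact mul_le_mul_left (hhigh ξ hmem) _
      _ = 2 * ∫⁻ ξ in Bᶜ, WE ξ * (‖F ξ‖₊ : ℝ≥0∞) ^ 2 :=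
          lintegral_const_mul 2 (hWEmeas.mul (hF.nnnorm.coe_nnreal_ennreal.pow_const 2))
      _ ≤ 2 * Xsq := mul_le_mul_right (setLIntegral_le_lintegral _ _) _
  -- high frequency L¹ estimate
  have hT3 : (∫⁻ ξ in Bᶜ, (‖F ξ‖₊ : ℝ≥0∞)) ≤
      J ^ (1/2:ℝ) * (2 * Xsq) ^ (1/2:ℝ) := by
    set u2 : EuclideanSpace ℝ (Fin d) → ℝ≥0∞ :=
      fun ξ => ENNReal.ofReal ((1 + ‖ξ‖ ^ 2) ^ (s/2)) with hu2def
    have hu2meas : Measurable u2 := ENNReal.measurable_ofReal.comp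
      ((measurable_const.add
        ((measurable_norm (α := EuclideanSpace ℝ (Fin d))).pow_const 2)).pow_const (s/2))
    have hu2pos : ∀ ξ, 0 < u2 ξ := by
      intro ξ
      have hb : (0:ℝ) < 1 + ‖ξ‖ ^ 2 := by positivity
      exact ENNReal.ofReal_pos.mpr (Real.rpow_pos_of_pos hb _)
    have hu2top : ∀ ξ, u2 ξ ≠ ⊤ := fun ξ => ENNReal.ofReal_ne_top
    have hu2sq : ∀ ξ, (u2 ξ) ^ (2:ℝ) = ENNReal.ofReal ((1 + ‖ξ‖ ^ 2) ^ s) := by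
      intro ξ
      have hb : (0:ℝ) < 1 + ‖ξ‖ ^ 2 := by positivity
      rw [hu2def, ENNReal.ofReal_rpow_of_nonneg (Real.rpow_nonneg hb.le _)
        (by norm_num : (0:ℝ) ≤ 2), ← Real.rpow_mul hb.le]
      congr 2
      ring
    have hpt : ∀ ξ, (‖F ξ‖₊ : ℝ≥0∞) =
        ((fun ξ => (u2 ξ)⁻¹) * fun ξ => u2 ξ * ‖F ξ‖₊) ξ := by
      intro ξ
      simp only [Pi.mul_apply]
      rw [← mul_assoc, ENNReal.inv_mul_cancel (hu2pos ξ).ne' (hu2top ξ), one_mul]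
    have e1 : ∫⁻ ξ in Bᶜ, (u2 ξ)⁻¹ ^ (2:ℝ) ≤ J := by
      have : ∫⁻ ξ in Bᶜ, (u2 ξ)⁻¹ ^ (2:ℝ)
          = ∫⁻ ξ in Bᶜ, ENNReal.ofReal ((1 + ‖ξ‖ ^ 2) ^ (-s)) := by
        apply lintegral_congr
        intro ξ
        have hb : (0:ℝ) < 1 + ‖ξ‖ ^ 2 := by positivity
        rw [ENNReal.inv_rpow, hu2sq ξ,
          ← ENNReal.ofReal_inv_of_pos (Real.rpow_pos_of_pos hb _),
          ← Real.rpow_neg hb.le]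
      rw [this, hJdef]
      exact setLIntegral_le_lintegral _ _
    have e2 : ∫⁻ ξ in Bᶜ, (u2 ξ * ‖F ξ‖₊) ^ (2:ℝ) ≤ 2 * Xsq := by
      have : ∫⁻ ξ in Bᶜ, (u2 ξ * ‖F ξ‖₊) ^ (2:ℝ)
          = ∫⁻ ξ in Bᶜ, ENNReal.ofReal ((1 + ‖ξ‖ ^ 2) ^ s) * (‖F ξ‖₊ : ℝ≥0∞) ^ 2 := by
        apply lintegral_congr
        intro ξ
        rw [ENNReal.mul_rpow_of_nonneg _ _ (by norm_num : (0:ℝ) ≤ 2), hu2sq ξ,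
          show ((2:ℝ)) = ((2:ℕ):ℝ) by norm_num, ENNReal.rpow_natCast]
      rw [this]
      exact hT2sq
    calc (∫⁻ ξ in Bᶜ, (‖F ξ‖₊ : ℝ≥0∞))
        = ∫⁻ ξ in Bᶜ, ((fun ξ => (u2 ξ)⁻¹) * fun ξ => u2 ξ * ‖F ξ‖₊) ξ :=
          lintegral_congr fun ξ => hpt ξ
      _ ≤ (∫⁻ ξ in Bᶜ, (u2 ξ)⁻¹ ^ (2:ℝ)) ^ (1/2:ℝ) *
          (∫⁻ ξ in Bᶜ, (u2 ξ * ‖F ξ‖₊) ^ (2:ℝ)) ^ (1/2:ℝ) :=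
          ENNReal.lintegral_mul_le_Lp_mul_Lq _ hconj hu2meas.inv.aemeasurable
            (hu2meas.mul hF.nnnorm.coe_nnreal_ennreal).aemeasurable
      _ ≤ J ^ (1/2:ℝ) * (2 * Xsq) ^ (1/2:ℝ) :=
          mul_le_mul' (ENNReal.rpow_le_rpow e1 (by norm_num))
            (ENNReal.rpow_le_rpow e2 (by norm_num))
  have hsplit2 : (2 * Xsq) ^ (1/2:ℝ) = (2:ℝ≥0∞) ^ (1/2:ℝ) * Xsq ^ (1/2:ℝ) :=
    ENNReal.mul_rpow_of_nonneg _ _ (by norm_num)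
  constructor
  · -- first inequality
    rw [hXNorm]
    calc (∫⁻ ξ in B, (‖F ξ‖₊ : ℝ≥0∞)) +
        (∫⁻ ξ in Bᶜ, ENNReal.ofReal ((1 + ‖ξ‖ ^ 2) ^ s) * (‖F ξ‖₊ : ℝ≥0∞) ^ 2) ^ (1/2:ℝ)
        ≤ Klow ^ (1/2:ℝ) * Xsq ^ (1/2:ℝ) + (2 * Xsq) ^ (1/2:ℝ) :=
          add_le_add hT1 (ENNReal.rpow_le_rpow hT2sq (by norm_num))
      _ = (Klow ^ (1/2:ℝ) + (2:ℝ≥0∞) ^ (1/2:ℝ)) * Xsq ^ (1/2:ℝ) := by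
          rw [hsplit2, add_mul]
      _ ≤ ENNReal.ofReal (Ktot.toReal + 1) * Xsq ^ (1/2:ℝ) := by
          apply mul_le_mul_left
          refine le_trans ?_ hC
          rw [hKtotdef]
          exact le_self_add
  · -- second inequality
    rw [hXNorm, eLpNorm_one_eq_lintegral_enorm,
      ← lintegral_add_compl (fun ξ => ‖F ξ‖ₑ) measurableSet_ball]
    calc (∫⁻ ξ in B, (‖F ξ‖₊ : ℝ≥0∞)) + (∫⁻ ξ in Bᶜ, (‖F ξ‖₊ : ℝ≥0∞))
        ≤ Klow ^ (1/2:ℝ) * Xsq ^ (1/2:ℝ) + J ^ (1/2:ℝ) * (2 * Xsq) ^ (1/2:ℝ) :=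
          add_le_add hT1 hT3
      _ = (Klow ^ (1/2:ℝ) + J ^ (1/2:ℝ) * (2:ℝ≥0∞) ^ (1/2:ℝ)) * Xsq ^ (1/2:ℝ) := by
          rw [hsplit2, add_mul]
          ring
      _ ≤ ENNReal.ofReal (Ktot.toReal + 1) * Xsq ^ (1/2:ℝ) := by
          apply mul_le_mul_left
          refine le_trans ?_ hC
          rw [hKtotdef]
          calc Klow ^ (1/2:ℝ) + J ^ (1/2:ℝ) * (2:ℝ≥0∞) ^ (1/2:ℝ)
              ≤ (Klow ^ (1/2:ℝ) + (2:ℝ≥0∞) ^ (1/2:ℝ))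
                + J ^ (1/2:ℝ) * (2:ℝ≥0∞) ^ (1/2:ℝ) :=
                add_le_add le_self_add le_rfl
end

section
/- Let d ≥ 2, s ≥ 0, and let Q ∈ O(d) be an orthogonal matrix with |Qe₁·e₁| < 1. Then there exists f ∈ X^s(ℝ^d;ℂ) \ L²(ℝ^d;ℂ) such that the rotated function f∘Q does not belong to X^s(ℝ^d;ℂ). In particular, H^s(ℝ^d;ℂ) is a proper subspace of X^s(ℝ^d;ℂ). -/
open MeasureTheory Metric ENNReal

namespace Stmt15Aux

noncomputable def rho (n : ℕ) : ℝ := (1/2:ℝ)^n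
noncomputable def rr (k n : ℕ) : ℝ := rho n ^ 2 * rho k

lemma rho_pos (n : ℕ) : 0 < rho n := by unfold rho; positivity
lemma rho_le_one (n : ℕ) : rho n ≤ 1 := by
  unfold rho; exact pow_le_one₀ (by norm_num) (by norm_num)
lemma rr_pos (k n : ℕ) : 0 < rr k n := by
  unfold rr; exact mul_pos (pow_pos (rho_pos n) 2) (rho_pos k)
lemma rr_le (k n : ℕ) (hk : rho k ≤ 1/4) : rr k n ≤ rho n * (1/4) := by
  unfold rr
  nlinarith [rho_pos n, rho_le_one n, rho_pos k]

variable {d : ℕ} [NeZero d]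

noncomputable def Bset (d : ℕ) [NeZero d] (u : EuclideanSpace ℝ (Fin d)) (k n : ℕ) :
    Set (EuclideanSpace ℝ (Fin d)) := ball (rho n • u) (rr k n)

noncomputable def Uset (d : ℕ) [NeZero d] (u : EuclideanSpace ℝ (Fin d)) (k : ℕ) :
    Set (EuclideanSpace ℝ (Fin d)) := ⋃ n, Bset d u k n

noncomputable def Ffun (d : ℕ) [NeZero d] (u : EuclideanSpace ℝ (Fin d)) (k : ℕ) :
    EuclideanSpace ℝ (Fin d) → ℂ :=
  (Uset d u k).indicator fun ξ => ((‖ξ‖⁻¹ ^ d : ℝ) : ℂ)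

lemma Bset_measurable (u : EuclideanSpace ℝ (Fin d)) (k n : ℕ) :
    MeasurableSet (Bset d u k n) := measurableSet_ball

lemma Uset_measurable (u : EuclideanSpace ℝ (Fin d)) (k : ℕ) :
    MeasurableSet (Uset d u k) := MeasurableSet.iUnion fun n => measurableSet_ball

lemma Ffun_measurable (u : EuclideanSpace ℝ (Fin d)) (k : ℕ) :
    Measurable (Ffun d u k) := by
  apply Measurable.indicator ?_ (Uset_measurable u k)
  exact Complex.measurable_ofReal.comp ((measurable_norm.inv).pow_const d)

lemma norm_bounds (u : EuclideanSpace ℝ (Fin d)) (hu : ‖u‖ = 1) (k : ℕ)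
    (hk : rho k ≤ 1/4) {n : ℕ} {ξ : EuclideanSpace ℝ (Fin d)} (hξ : ξ ∈ Bset d u k n) :
    rho n / 2 ≤ ‖ξ‖ ∧ ‖ξ‖ ≤ 2 * rho n := by
  have h1 : ‖ξ - rho n • u‖ < rr k n := by
    rw [← dist_eq_norm]; exact mem_ball.mp hξ
  have hcn : ‖rho n • u‖ = rho n := by
    rw [norm_smul, hu, mul_one, Real.norm_eq_abs, abs_of_pos (rho_pos n)]
  have h2 : |‖ξ‖ - ‖rho n • u‖| ≤ ‖ξ - rho n • u‖ := abs_norm_sub_norm_le _ _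
  rw [hcn] at h2
  have h3 := abs_le.mp h2
  have h4 := rr_le k n hk
  constructor <;> nlinarith [h3.1, h3.2, (rho_pos n).le]

lemma Bset_disjoint (u : EuclideanSpace ℝ (Fin d)) (hu : ‖u‖ = 1) (k : ℕ)
    (hk : rho k ≤ 1/4) : Pairwise (Function.onFun Disjoint fun n => Bset d u k n) := by
  have key : ∀ n m, n < m → Disjoint (Bset d u k n) (Bset d u k m) := by
    intro n m hnm
    apply ball_disjoint_ball
    have hd : dist (rho n • u) (rho m • u) = rho n - rho m := by
      rw [dist_eq_norm, ← sub_smul, norm_smul, hu, mul_one, Real.norm_eq_abs,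
        abs_of_pos]
      have : rho m < rho n :=
        pow_lt_pow_right_of_lt_one₀ (by norm_num) (by norm_num) hnm
      linarith
    rw [hd]
    have hm : rho m ≤ rho n * (1/2) := by
      unfold rho
      calc ((1:ℝ)/2)^m ≤ (1/2:ℝ)^(n+1) :=
        pow_le_pow_of_le_one (by norm_num) (by norm_num) hnm
      _ = (1/2:ℝ)^n * (1/2) := by rw [pow_succ]
    have h1 := rr_le k n hk
    have h2 := rr_le k m hk
    have h3 := (rho_pos n).le
    have h4 := (rho_pos m).le
    nlinarith
  intro n m hnm
  rcases lt_or_gt_of_ne hnm with h | h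
  · exact key n m h
  · exact (key m n h).symm

lemma Ffun_norm_of_mem (u : EuclideanSpace ℝ (Fin d)) (k : ℕ) {n : ℕ}
    {ξ : EuclideanSpace ℝ (Fin d)} (hξ : ξ ∈ Bset d u k n) :
    ‖Ffun d u k ξ‖ = ‖ξ‖⁻¹ ^ d := by
  have hU : ξ ∈ Uset d u k := Set.mem_iUnion.mpr ⟨n, hξ⟩
  rw [Ffun, Set.indicator_of_mem hU, Complex.norm_real, Real.norm_eq_abs,
    abs_of_nonneg (by positivity)]

lemma vol_Bset (u : EuclideanSpace ℝ (Fin d)) (k n : ℕ) :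
    volume (Bset d u k n) =
      ENNReal.ofReal (rr k n ^ d) * volume (ball (0 : EuclideanSpace ℝ (Fin d)) 1) := by
  have : Nontrivial (EuclideanSpace ℝ (Fin d)) := by infer_instance
  rw [Bset, Measure.addHaar_ball _ _ (rr_pos k n).le, finrank_euclideanSpace_fin]

end Stmt15Aux

namespace Stmt15Aux

lemma enorm_sq_eq (z : ℂ) : (‖z‖₊ : ℝ≥0∞) ^ 2 = ENNReal.ofReal (‖z‖ ^ 2) := by
  rw [ENNReal.ofReal_pow (norm_nonneg _), ofReal_norm]; rfl

variable {d : ℕ} [NeZero d]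

lemma partA (u : EuclideanSpace ℝ (Fin d)) (hu : ‖u‖ = 1) (k : ℕ) (hk : rho k ≤ 1/4) :
    ∫⁻ ξ, (‖Ffun d u k ξ‖₊ : ℝ≥0∞) ^ 2 = ⊤ := by
  set V := volume (ball (0 : EuclideanSpace ℝ (Fin d)) 1) with hV
  have hV0 : V ≠ 0 := (measure_ball_pos volume _ one_pos).ne'
  set κ : ℝ≥0∞ := ENNReal.ofReal (((2:ℝ)⁻¹ ^ d) ^ 2 * rho k ^ d) * V with hκ
  have hκ0 : κ ≠ 0 := by
    apply mul_ne_zero _ hV0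
    exact (ENNReal.ofReal_pos.mpr (by have := rho_pos k; positivity)).ne'
  have hlow : ∀ n, κ ≤ ∫⁻ ξ in Bset d u k n, (‖Ffun d u k ξ‖₊ : ℝ≥0∞) ^ 2 := by
    intro n
    have hpt : ∀ ξ ∈ Bset d u k n,
        ENNReal.ofReal ((((2 * rho n)⁻¹) ^ d) ^ 2) ≤ (‖Ffun d u k ξ‖₊ : ℝ≥0∞) ^ 2 := by
      intro ξ hξ
      rw [enorm_sq_eq]
      apply ENNReal.ofReal_le_ofReal
      obtain ⟨h2, h1⟩ := norm_bounds u hu k hk hξ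
      have hξpos : 0 < ‖ξ‖ := lt_of_lt_of_le (by have := rho_pos n; positivity) h2
      rw [Ffun_norm_of_mem u k hξ]
      have hinv : (2 * rho n)⁻¹ ≤ ‖ξ‖⁻¹ := by
        apply inv_anti₀ hξpos h1
      have hρn := rho_pos n
      have hp : (2 * rho n)⁻¹ ^ d ≤ ‖ξ‖⁻¹ ^ d :=
        pow_le_pow_left₀ (by positivity) hinv d
      exact pow_le_pow_left₀ (by positivity) hp 2
    calc κ = ENNReal.ofReal ((((2 * rho n)⁻¹) ^ d) ^ 2) * volume (Bset d u k n) := by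
          rw [hκ, vol_Bset, ← mul_assoc, ← ENNReal.ofReal_mul (by positivity)]
          congr 2
          unfold rr
          have hρn := rho_pos n
          have hρk := rho_pos k
          have hρn' : rho n ^ (d*2) * (rho n)⁻¹ ^ (d*2) = 1 := by
            rw [← mul_pow, mul_inv_cancel₀ hρn.ne', one_pow]
          field_simp
          linear_combination (-(rho k ^ d * (1/2:ℝ)^(d*2))) * hρn'
      _ = ∫⁻ _ in Bset d u k n, ENNReal.ofReal ((((2 * rho n)⁻¹) ^ d) ^ 2) :=
          (setLIntegral_const _ _).symm
      _ ≤ ∫⁻ ξ in Bset d u k n, (‖Ffun d u k ξ‖₊ : ℝ≥0∞) ^ 2 :=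
          setLIntegral_mono' measurableSet_ball hpt
  apply top_unique
  calc (⊤ : ℝ≥0∞) = ∑' _ : ℕ, κ := (ENNReal.tsum_const_eq_top_of_ne_zero hκ0).symm
    _ ≤ ∑' n, ∫⁻ ξ in Bset d u k n, (‖Ffun d u k ξ‖₊ : ℝ≥0∞) ^ 2 :=
        ENNReal.tsum_le_tsum hlow
    _ = ∫⁻ ξ in Uset d u k, (‖Ffun d u k ξ‖₊ : ℝ≥0∞) ^ 2 :=
        (lintegral_iUnion (fun n => measurableSet_ball) (Bset_disjoint u hu k hk) _).symm
    _ ≤ ∫⁻ ξ, (‖Ffun d u k ξ‖₊ : ℝ≥0∞) ^ 2 :=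
        lintegral_mono' Measure.restrict_le_self le_rfl

end Stmt15Aux

namespace Stmt15Aux
variable {d : ℕ} [NeZero d]

lemma abs_coord_le (x : EuclideanSpace ℝ (Fin d)) (i : Fin d) : |x i| ≤ ‖x‖ := by
  have := EuclideanSpace.norm_eq x
  have h1 : |x i| = Real.sqrt ((x i)^2) := by rw [Real.sqrt_sq_eq_abs]
  rw [this, h1]
  apply Real.sqrt_le_sqrt
  have h2 : (x i)^2 = ∑ j ∈ {i}, ‖x j‖^2 := by simp [Real.norm_eq_abs, sq_abs]
  rw [h2]
  apply Finset.sum_le_sum_of_subset_of_nonneg (Finset.subset_univ _)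
  intro j _ _; positivity

lemma weight_upper {x t : ℝ} (h1 : 1 ≤ x) (h5 : x ≤ 5) :
    x ^ t ≤ max 1 (5 ^ t : ℝ) := by
  rcases le_or_gt 0 t with ht | ht
  · exact le_max_of_le_right (Real.rpow_le_rpow (by linarith) h5 ht)
  · exact le_max_of_le_left (Real.rpow_le_one_of_one_le_of_nonpos h1 ht.le)

lemma weight_lower {x t : ℝ} (h1 : 1 ≤ x) (h5 : x ≤ 5) :
    min 1 (5 ^ t : ℝ) ≤ x ^ t := by
  rcases le_or_gt 0 t with ht | ht
  · refine le_trans (min_le_left _ _) ?_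
    calc (1:ℝ) = 1 ^ t := (Real.one_rpow t).symm
    _ ≤ x ^ t := Real.rpow_le_rpow zero_le_one h1 ht
  · exact le_trans (min_le_right _ _) (Real.rpow_le_rpow_of_nonpos (by linarith) h5 ht.le)

lemma mu_nonneg (ξ : EuclideanSpace ℝ (Fin d)) : 0 ≤ mu ξ := by
  unfold mu; positivity

lemma rho_sq (n : ℕ) : rho n ^ 2 = (1/4:ℝ)^n := by
  unfold rho; rw [← pow_mul, mul_comm n 2, pow_mul]; norm_num

lemma partB (u : EuclideanSpace ℝ (Fin d)) (hu : ‖u‖ = 1) (hu0 : u 0 = 0) (k : ℕ)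
    (hk : rho k ≤ 1/4) (s : ℝ) :
    ∫⁻ ξ, (‖(mu ξ * (1 + ‖ξ‖ ^ 2) ^ ((s - 1) / 2)) • Ffun d u k ξ‖₊ : ℝ≥0∞) ^ 2 < ⊤ := by
  set t : ℝ := (s - 1) / 2 with ht
  set C : ℝ := max 1 ((5:ℝ) ^ t) with hC
  have hC0 : (0:ℝ) < C := lt_of_lt_of_le one_pos (le_max_left _ _)
  set V := volume (ball (0 : EuclideanSpace ℝ (Fin d)) 1) with hV
  set K : ℝ := 9 * C^2 * 4^d * rho k ^ d with hK
  have hKpos : 0 < K := by have := rho_pos k; positivity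
  set f : EuclideanSpace ℝ (Fin d) → ℝ≥0∞ :=
    fun ξ => (‖(mu ξ * (1 + ‖ξ‖ ^ 2) ^ t) • Ffun d u k ξ‖₊ : ℝ≥0∞) ^ 2 with hf
  have hstep1 : ∫⁻ ξ, f ξ = ∫⁻ ξ in Uset d u k, f ξ := by
    rw [← lintegral_indicator (Uset_measurable u k)]
    apply lintegral_congr
    intro ξ
    by_cases hξ : ξ ∈ Uset d u k
    · rw [Set.indicator_of_mem hξ]
    · rw [Set.indicator_of_notMem hξ, hf]
      have hF0 : Ffun d u k ξ = 0 := Set.indicator_of_notMem hξ _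
      simp [hF0]
  have hstep2 : ∫⁻ ξ in Uset d u k, f ξ = ∑' n, ∫⁻ ξ in Bset d u k n, f ξ :=
    lintegral_iUnion (fun n => measurableSet_ball) (Bset_disjoint u hu k hk) _
  have hterm : ∀ n, ∫⁻ ξ in Bset d u k n, f ξ ≤ ENNReal.ofReal (K * (1/4:ℝ)^n) * V := by
    intro n
    have hρn := rho_pos n
    have hρk := rho_pos k
    have hpt : ∀ ξ ∈ Bset d u k n,
        f ξ ≤ ENNReal.ofReal ((3 * rho n * C * ((rho n / 2)⁻¹) ^ d) ^ 2) := by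
      intro ξ hξ
      simp only [hf]
      rw [enorm_sq_eq]
      apply ENNReal.ofReal_le_ofReal
      obtain ⟨h2, h1⟩ := norm_bounds u hu k hk hξ
      have hξpos : 0 < ‖ξ‖ := lt_of_lt_of_le (by positivity) h2
      -- bound on |ξ 0|
      have hcoord : |ξ 0| ≤ rr k n := by
        have hc0 : (rho n • u) 0 = 0 := by
          have : (rho n • u) 0 = rho n * u 0 := rfl
          rw [this, hu0, mul_zero]
        have he : ξ 0 = (ξ - rho n • u) 0 := by
          have : (ξ - rho n • u) 0 = ξ 0 - (rho n • u) 0 := rfl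
          rw [this, hc0, sub_zero]
        rw [he]
        refine le_trans (abs_coord_le _ _) ?_
        rw [← dist_eq_norm]
        exact (mem_ball.mp hξ).le
      -- bound mu
      have hmu : mu ξ ≤ 3 * rho n := by
        unfold mu
        have hdiv : |ξ 0| / ‖ξ‖ ≤ rr k n / (rho n / 2) :=
          div_le_div₀ (rr_pos k n).le hcoord (by positivity) h2
        have heq : rr k n / (rho n / 2) ≤ rho n := by
          unfold rr
          rw [div_le_iff₀ (by positivity)]
          nlinarith [rho_le_one n]
        linarith
      -- bound rpow
      have hrp : (1 + ‖ξ‖ ^ 2) ^ t ≤ C := by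
        rw [hC]
        apply weight_upper (by nlinarith [norm_nonneg ξ])
        nlinarith [rho_le_one n]
      -- bound ‖F‖
      have hFb : ‖Ffun d u k ξ‖ ≤ ((rho n / 2)⁻¹) ^ d := by
        rw [Ffun_norm_of_mem u k hξ]
        exact pow_le_pow_left₀ (by positivity) (inv_anti₀ (by positivity) h2) d
      rw [norm_smul, Real.norm_eq_abs,
        abs_of_nonneg (mul_nonneg (mu_nonneg ξ) (Real.rpow_nonneg (by positivity) t))]
      have hb1 : mu ξ * (1 + ‖ξ‖ ^ 2) ^ t * ‖Ffun d u k ξ‖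
          ≤ (3 * rho n * C) * ((rho n / 2)⁻¹) ^ d := by
        apply mul_le_mul _ hFb (norm_nonneg _) (by positivity)
        exact mul_le_mul hmu hrp (Real.rpow_nonneg (by positivity) t) (by positivity)
      calc (mu ξ * (1 + ‖ξ‖ ^ 2) ^ t * ‖Ffun d u k ξ‖) ^ 2
          ≤ ((3 * rho n * C) * ((rho n / 2)⁻¹) ^ d) ^ 2 := by
            apply pow_le_pow_left₀ _ hb1 2
            exact mul_nonneg (mul_nonneg (mu_nonneg ξ) (Real.rpow_nonneg (by positivity) t))
              (norm_nonneg _)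
        _ = (3 * rho n * C * ((rho n / 2)⁻¹) ^ d) ^ 2 := by ring
    calc ∫⁻ ξ in Bset d u k n, f ξ
        ≤ ∫⁻ _ in Bset d u k n,
            ENNReal.ofReal ((3 * rho n * C * ((rho n / 2)⁻¹) ^ d) ^ 2) :=
          setLIntegral_mono' measurableSet_ball hpt
      _ = ENNReal.ofReal ((3 * rho n * C * ((rho n / 2)⁻¹) ^ d) ^ 2) *
            volume (Bset d u k n) := setLIntegral_const _ _
      _ = ENNReal.ofReal (K * (1/4:ℝ)^n) * V := by
          rw [vol_Bset, ← mul_assoc, ← ENNReal.ofReal_mul (by positivity)]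
          congr 2
          rw [← rho_sq, hK]
          unfold rr
          have h4 : (4:ℝ)^d = 2^(d*2) := by rw [mul_comm d 2, pow_mul]; norm_num
          rw [h4]
          have hρn' : rho n ^ (d*2) * (rho n)⁻¹ ^ (d*2) = 1 := by
            rw [← mul_pow, mul_inv_cancel₀ hρn.ne', one_pow]
          field_simp
          linear_combination (rho k ^ d * 2^(d*2) * 9) * hρn'
  calc ∫⁻ ξ, f ξ = ∑' n, ∫⁻ ξ in Bset d u k n, f ξ := by rw [hstep1, hstep2]
    _ ≤ ∑' n, ENNReal.ofReal (K * (1/4:ℝ)^n) * V := ENNReal.tsum_le_tsum hterm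
    _ = (∑' n, ENNReal.ofReal (K * (1/4:ℝ)^n)) * V := ENNReal.tsum_mul_right
    _ = ENNReal.ofReal (∑' n, K * (1/4:ℝ)^n) * V := by
        rw [ENNReal.ofReal_tsum_of_nonneg (fun n => by positivity)
          ((summable_geometric_of_lt_one (by norm_num) (by norm_num)).mul_left K)]
    _ < ⊤ := ENNReal.mul_lt_top ENNReal.ofReal_lt_top measure_ball_lt_top

end Stmt15Aux

namespace Stmt15Aux
variable {d : ℕ} [NeZero d]

lemma partC (b : EuclideanSpace ℝ (Fin d)) (hnb : ‖b‖ = 1) (c0 : ℝ) (hc0 : 0 < c0)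
    (hb0 : b 0 = c0) (k : ℕ) (hk : rho k ≤ 1/4) (hkc : rho k ≤ c0/4) (s : ℝ)
    (G : EuclideanSpace ℝ (Fin d) → ℂ)
    (hG : ∀ n, ∀ ξ ∈ Bset d b k n, (2 * rho n)⁻¹ ^ d ≤ ‖G ξ‖) :
    ∫⁻ ξ, (‖(mu ξ * (1 + ‖ξ‖ ^ 2) ^ ((s - 1) / 2)) • G ξ‖₊ : ℝ≥0∞) ^ 2 = ⊤ := by
  set t : ℝ := (s - 1) / 2 with ht
  set C' : ℝ := min 1 ((5:ℝ) ^ t) with hC'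
  have hC'pos : 0 < C' := lt_min one_pos (Real.rpow_pos_of_pos (by norm_num) t)
  set V := volume (ball (0 : EuclideanSpace ℝ (Fin d)) 1) with hV
  have hV0 : V ≠ 0 := (measure_ball_pos volume _ one_pos).ne'
  set κ : ℝ≥0∞ :=
    ENNReal.ofReal ((3/8 * c0 * C') ^ 2 * ((2:ℝ)⁻¹ ^ d) ^ 2 * rho k ^ d) * V with hκ
  have hκ0 : κ ≠ 0 := by
    apply mul_ne_zero _ hV0
    have := rho_pos k
    exact (ENNReal.ofReal_pos.mpr (by positivity)).ne'
  have hlow : ∀ n, κ ≤ ∫⁻ ξ in Bset d b k n,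
      (‖(mu ξ * (1 + ‖ξ‖ ^ 2) ^ t) • G ξ‖₊ : ℝ≥0∞) ^ 2 := by
    intro n
    have hρn := rho_pos n
    have hρk := rho_pos k
    have hrrc : rr k n ≤ rho n * (c0/4) := by
      unfold rr
      calc rho n ^ 2 * rho k ≤ rho n * rho k := by
            have h1 : rho n ^ 2 ≤ rho n := by nlinarith [rho_le_one n]
            exact mul_le_mul_of_nonneg_right h1 hρk.le
        _ ≤ rho n * (c0/4) := mul_le_mul_of_nonneg_left hkc hρn.le
    have hpt : ∀ ξ ∈ Bset d b k n,
        ENNReal.ofReal ((3/8 * c0 * C' * ((2 * rho n)⁻¹ ^ d)) ^ 2)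
          ≤ (‖(mu ξ * (1 + ‖ξ‖ ^ 2) ^ t) • G ξ‖₊ : ℝ≥0∞) ^ 2 := by
      intro ξ hξ
      rw [enorm_sq_eq]
      apply ENNReal.ofReal_le_ofReal
      obtain ⟨h2, h1⟩ := norm_bounds b hnb k hk hξ
      have hξpos : 0 < ‖ξ‖ := lt_of_lt_of_le (by positivity) h2
      -- coordinate lower bound
      have hcoord : 3/4 * c0 * rho n ≤ |ξ 0| := by
        have hc' : (rho n • b) 0 = rho n * c0 := by
          have : (rho n • b) 0 = rho n * b 0 := rfl
          rw [this, hb0]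
        have he : ξ 0 = rho n * c0 + (ξ - rho n • b) 0 := by
          have h' : (ξ - rho n • b) 0 = ξ 0 - (rho n • b) 0 := rfl
          rw [h', hc']; ring
        have habs : |(ξ - rho n • b) 0| ≤ rr k n := by
          refine le_trans (abs_coord_le _ _) ?_
          rw [← dist_eq_norm]
          exact (mem_ball.mp hξ).le
        have h3 := abs_le.mp habs
        refine le_trans ?_ (le_abs_self _)
        rw [he]
        nlinarith [h3.1]
      -- mu lower bound
      have hmu : 3/8 * c0 ≤ mu ξ := by
        unfold mu
        have hdiv : (3/4 * c0 * rho n) / (2 * rho n) ≤ |ξ 0| / ‖ξ‖ :=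
          div_le_div₀ (abs_nonneg _) hcoord (by positivity) h1
        have heq : (3/4 * c0 * rho n) / (2 * rho n) = 3/8 * c0 := by
          field_simp
          ring
        rw [heq] at hdiv
        have := norm_nonneg ξ
        linarith
      -- rpow lower bound
      have hrp : C' ≤ (1 + ‖ξ‖ ^ 2) ^ t := by
        rw [hC']
        apply weight_lower (by nlinarith [norm_nonneg ξ])
        nlinarith [rho_le_one n]
      have hGb := hG n ξ hξ
      rw [norm_smul, Real.norm_eq_abs]
      have hW : 3/8 * c0 * C' ≤ |mu ξ * (1 + ‖ξ‖ ^ 2) ^ t| := by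
        refine le_trans ?_ (le_abs_self _)
        exact mul_le_mul hmu hrp hC'pos.le (mu_nonneg ξ)
      have hb1 : 3/8 * c0 * C' * ((2 * rho n)⁻¹ ^ d)
          ≤ |mu ξ * (1 + ‖ξ‖ ^ 2) ^ t| * ‖G ξ‖ :=
        mul_le_mul hW hGb (by positivity) (abs_nonneg _)
      exact pow_le_pow_left₀ (by positivity) hb1 2
    calc κ = ENNReal.ofReal ((3/8 * c0 * C' * ((2 * rho n)⁻¹ ^ d)) ^ 2) *
          volume (Bset d b k n) := by
          rw [hκ, vol_Bset, ← mul_assoc, ← ENNReal.ofReal_mul (by positivity)]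
          congr 2
          unfold rr
          have hρn' : rho n ^ (d*2) * (rho n)⁻¹ ^ (d*2) = 1 := by
            rw [← mul_pow, mul_inv_cancel₀ hρn.ne', one_pow]
          field_simp
          linear_combination (-(rho k ^ d * (1/2:ℝ)^(d*2))) * hρn'
      _ = ∫⁻ _ in Bset d b k n,
            ENNReal.ofReal ((3/8 * c0 * C' * ((2 * rho n)⁻¹ ^ d)) ^ 2) :=
          (setLIntegral_const _ _).symm
      _ ≤ ∫⁻ ξ in Bset d b k n, (‖(mu ξ * (1 + ‖ξ‖ ^ 2) ^ t) • G ξ‖₊ : ℝ≥0∞) ^ 2 :=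
          setLIntegral_mono' measurableSet_ball hpt
  apply top_unique
  calc (⊤ : ℝ≥0∞) = ∑' _ : ℕ, κ := (ENNReal.tsum_const_eq_top_of_ne_zero hκ0).symm
    _ ≤ ∑' n, ∫⁻ ξ in Bset d b k n, (‖(mu ξ * (1 + ‖ξ‖ ^ 2) ^ t) • G ξ‖₊ : ℝ≥0∞) ^ 2 :=
        ENNReal.tsum_le_tsum hlow
    _ = ∫⁻ ξ in Uset d b k, (‖(mu ξ * (1 + ‖ξ‖ ^ 2) ^ t) • G ξ‖₊ : ℝ≥0∞) ^ 2 :=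
        (lintegral_iUnion (fun n => measurableSet_ball) (Bset_disjoint b hnb k hk) _).symm
    _ ≤ ∫⁻ ξ, (‖(mu ξ * (1 + ‖ξ‖ ^ 2) ^ t) • G ξ‖₊ : ℝ≥0∞) ^ 2 :=
        lintegral_mono' Measure.restrict_le_self le_rfl

end Stmt15Aux

namespace Stmt15Aux

lemma elp_two {α : Type*} [MeasurableSpace α] {μ : Measure α} (g : α → ℂ) :
    eLpNorm g 2 μ = (∫⁻ x, (‖g x‖₊ : ℝ≥0∞) ^ 2 ∂μ) ^ (1/2 : ℝ) := by
  rw [eLpNorm_eq_lintegral_rpow_enorm_toReal two_ne_zero ENNReal.ofNat_ne_top]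
  simp only [ENNReal.toReal_ofNat, one_div, enorm_eq_nnnorm]
  congr 1
  apply lintegral_congr
  intro x
  rw [← ENNReal.rpow_natCast]
  norm_num

lemma elp_two_top_iff {α : Type*} [MeasurableSpace α] {μ : Measure α} (g : α → ℂ) :
    eLpNorm g 2 μ = ⊤ ↔ ∫⁻ x, (‖g x‖₊ : ℝ≥0∞) ^ 2 ∂μ = ⊤ := by
  rw [elp_two, ENNReal.rpow_eq_top_iff]
  constructor
  · rintro (⟨h, _⟩ | ⟨h, _⟩) <;> [skip; exact h]
    · norm_num at *
  · intro h; right; exact ⟨h, by norm_num⟩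

lemma elp_two_lt_top_iff {α : Type*} [MeasurableSpace α] {μ : Measure α} (g : α → ℂ) :
    eLpNorm g 2 μ < ⊤ ↔ ∫⁻ x, (‖g x‖₊ : ℝ≥0∞) ^ 2 ∂μ < ⊤ := by
  rw [lt_top_iff_ne_top, lt_top_iff_ne_top, not_iff_not.symm, not_not, not_not,
    elp_two_top_iff]

end Stmt15Aux

open Stmt15Aux in
/-- `X^s` is not rotation invariant for `d ≥ 2`: for any orthogonal `Q` with
`|Qe₁·e₁| < 1` there is `f ∈ X^s \ L²` with `f ∘ Q ∉ X^s`.  In particular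
`H^s(ℝ^d;ℂ) ⊊ X^s(ℝ^d;ℂ)`. -/
theorem stmt15 (d : ℕ) [NeZero d] (hd : 2 ≤ d) (s : ℝ) (hs : 0 ≤ s)
    (Q : EuclideanSpace ℝ (Fin d) ≃ₗᵢ[ℝ] EuclideanSpace ℝ (Fin d))
    (hQ : |(Q (EuclideanSpace.single (0 : Fin d) (1 : ℝ))) 0| < 1) :
    ∃ F : EuclideanSpace ℝ (Fin d) → ℂ, Measurable F ∧
      XNorm s F < ⊤ ∧ eLpNorm F 2 volume = ⊤ ∧
      XNorm s (fun ξ => F (Q ξ)) = ⊤ := by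
  classical
  -- ### geometric setup
  set e1 : EuclideanSpace ℝ (Fin d) := EuclideanSpace.single (0 : Fin d) (1 : ℝ) with he1
  set w : EuclideanSpace ℝ (Fin d) := Q e1 with hw
  set a : ℝ := w 0 with ha
  have hne1 : ‖e1‖ = 1 := by rw [he1, EuclideanSpace.norm_single, norm_one]
  have hnw : ‖w‖ = 1 := by rw [hw, Q.norm_map, hne1]
  have hwe1 : (inner ℝ w e1 : ℝ) = a := by
    rw [he1, EuclideanSpace.inner_single_right]; simp [ha]
  have h3 : (inner ℝ e1 w : ℝ) = a := by rw [real_inner_comm]; exact hwe1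
  have h5 : (inner ℝ w w : ℝ) = 1 := by rw [real_inner_self_eq_norm_sq, hnw]; norm_num
  set w' : EuclideanSpace ℝ (Fin d) := w - a • e1 with hw'
  have hw'sq : ‖w'‖ ^ 2 = 1 - a ^ 2 := by
    have h4 : (inner ℝ e1 e1 : ℝ) = 1 := by rw [real_inner_self_eq_norm_sq, hne1]; norm_num
    have h1 : ‖w'‖ ^ 2 = inner ℝ w' w' := (real_inner_self_eq_norm_sq _).symm
    rw [h1, hw', inner_sub_sub_self, real_inner_smul_left, real_inner_smul_right,
      real_inner_smul_left, real_inner_smul_right, h3, h4, h5, hwe1]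
    ring
  have ha2 : a ^ 2 < 1 := by
    have := (abs_lt.mp hQ); nlinarith [this.1, this.2]
  set c0 : ℝ := ‖w'‖ with hc0
  have hc0pos : 0 < c0 := by
    have hne : w' ≠ 0 := by
      intro h
      rw [hc0, h] at hw'sq
      simp at hw'sq
      nlinarith
    rw [hc0]; exact norm_pos_iff.mpr hne
  have hw'w : (inner ℝ w' w : ℝ) = c0 ^ 2 := by
    rw [hw', inner_sub_left, real_inner_smul_left, h3, h5]
    linear_combination -hw'sq
  set v : EuclideanSpace ℝ (Fin d) := c0⁻¹ • w' with hv
  have hnv : ‖v‖ = 1 := by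
    rw [hv, norm_smul, norm_inv, Real.norm_eq_abs, abs_of_pos hc0pos, ← hc0,
      inv_mul_cancel₀ hc0pos.ne']
  have hv0 : v 0 = 0 := by
    have hw'0 : w' 0 = 0 := by
      have h1 : e1 0 = 1 := by rw [he1]; simp [EuclideanSpace.single_apply]
      rw [hw']
      simp only [PiLp.sub_apply, PiLp.smul_apply, h1, smul_eq_mul, mul_one, ha, sub_self]
    rw [hv]
    simp [PiLp.smul_apply, hw'0]
  have hvw : (inner ℝ v w : ℝ) = c0 := by
    rw [hv, real_inner_smul_left, hw'w]
    field_simp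
  set b : EuclideanSpace ℝ (Fin d) := Q.symm v with hb
  have hnb : ‖b‖ = 1 := by rw [hb, Q.symm.norm_map, hnv]
  have hb0 : b 0 = c0 := by
    have h1 : (inner ℝ b e1 : ℝ) = b 0 := by
      rw [he1, EuclideanSpace.inner_single_right]; simp
    have h2 : (inner ℝ b e1 : ℝ) = inner ℝ (Q b) (Q e1) := (Q.inner_map_map b e1).symm
    rw [hb, Q.apply_symm_apply, ← hw] at h2
    rw [← h1, h2, hvw]
  -- ### choice of scale k
  obtain ⟨k0, hk0⟩ := exists_pow_lt_of_lt_one (show (0:ℝ) < c0/4 by positivity)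
    (show (1/2:ℝ) < 1 by norm_num)
  have hρk4 : rho (k0 + 2) ≤ 1/4 := by
    unfold rho
    calc (1/2:ℝ)^(k0+2) ≤ (1/2:ℝ)^2 :=
      pow_le_pow_of_le_one (by norm_num) (by norm_num) (by omega)
    _ = 1/4 := by norm_num
  have hρkc : rho (k0 + 2) ≤ c0/4 := by
    unfold rho
    calc (1/2:ℝ)^(k0+2) ≤ (1/2:ℝ)^k0 :=
      pow_le_pow_of_le_one (by norm_num) (by norm_num) (by omega)
    _ ≤ c0/4 := hk0.le
  -- ### conclusion
  refine ⟨Ffun d v (k0 + 2), Ffun_measurable v (k0 + 2), ?_, ?_, ?_⟩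
  · rw [XNorm, elp_two_lt_top_iff]
    exact partB v hnv hv0 (k0 + 2) hρk4 s
  · rw [elp_two_top_iff]
    exact partA v hnv (k0 + 2) hρk4
  · rw [XNorm, elp_two_top_iff]
    apply partC b hnb c0 hc0pos hb0 (k0 + 2) hρk4 hρkc s
    intro n ξ hξ
    have hQmem : Q ξ ∈ Bset d v (k0 + 2) n := by
      rw [Bset, mem_ball]
      have hQb : Q (rho n • b) = rho n • v := by
        rw [_root_.map_smul, hb, Q.apply_symm_apply]
      calc dist (Q ξ) (rho n • v) = dist (Q ξ) (Q (rho n • b)) := by rw [hQb]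
        _ = dist ξ (rho n • b) := Q.dist_map ξ (rho n • b)
        _ < rr (k0 + 2) n := mem_ball.mp hξ
    have hFn : ‖Ffun d v (k0 + 2) (Q ξ)‖ = ‖ξ‖⁻¹ ^ d := by
      rw [Ffun_norm_of_mem v (k0 + 2) hQmem, Q.norm_map]
    rw [hFn]
    obtain ⟨h2, h1⟩ := norm_bounds b hnb (k0 + 2) hρk4 hξ
    have hρn := rho_pos n
    have hξpos : 0 < ‖ξ‖ := lt_of_lt_of_le (by positivity) h2
    exact pow_le_pow_left₀ (by positivity) (inv_anti₀ hξpos h1) d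
end
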